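/- Let n ≥ 10 and consider the dataset in ℝ² consisting of one sample a₁ = (1/2, −1) with label y₁ = 1 and n − 1 samples a_i = (−1/2, −1) with label y_i = −1 (i = 2,…,n). This dataset is separable with margin μ ≥ 1/2 (the unit vector (1,0) certifies it) and R = √5/2. Nevertheless, the Batch Perceptron started from θ̂₀ = 0 does not solve the classification task within ⌊3n/10⌋ iterations: S_t ≠ ∅ for every t with 1 ≤ t ≤ ⌊3n/10⌋. Hence Batch Perceptron requires at least Ω(n) iterations on this dataset. -/

import Mathlib

open scoped BigOperators

/-- The Euclidean dot product on `ℝ²`. -/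
def dot2 (u v : ℝ × ℝ) : ℝ := u.1 * v.1 + u.2 * v.2

/-!
Only the first sample `(1/2, -1)` is ever misclassified early on, so after the initial half step
`θ₁ = (1/4, 1/2 - 1/n)` every update adds `(1/n) • (1/2, -1)`, which gives the closed form
`θ_t = (1/4 + (t - 1)/(2n), 1/2 - t/n)`. At that point the first sample has margin
`(10t - 3n - 2)/(8n)` and every other sample has margin `(5n - 6t - 2)/(8n)`, so as long as
`10t ≤ 3n` the first sample stays misclassified while all others stay correctly classified.
-/

open Finset

namespace BatchPerceptron

noncomputable def hardSample {n : ℕ} (i : Fin n) : ℝ × ℝ :=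
  if (i : ℕ) = 0 then ((1 / 2 : ℝ), (-1 : ℝ)) else ((-1 / 2 : ℝ), (-1 : ℝ))

noncomputable def hardLabel {n : ℕ} (i : Fin n) : ℝ :=
  if (i : ℕ) = 0 then (1 : ℝ) else (-1 : ℝ)

/-- Closed form of the Batch Perceptron iterate `θ̂_t`, valid for `1 ≤ t ≤ ⌊3n/10⌋`. -/
noncomputable def iterate (n t : ℕ) : ℝ × ℝ :=
  (1 / 4 + ((t : ℝ) - 1) / (2 * n), 1 / 2 - t / n)

lemma hardLabel_mul_dot2_hardSample_one_zero {n : ℕ} (i : Fin n) :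
    hardLabel i * dot2 (hardSample i) (1, 0) = 1 / 2 := by
  unfold hardLabel hardSample dot2
  split_ifs <;> norm_num

lemma sqrt_dot2_hardSample_self {n : ℕ} (i : Fin n) :
    Real.sqrt (dot2 (hardSample i) (hardSample i)) = Real.sqrt 5 / 2 := by
  have hnorm : dot2 (hardSample i) (hardSample i) = 5 / 2 ^ 2 := by
    unfold hardSample dot2
    split_ifs <;> norm_num
  rw [hnorm, Real.sqrt_div' _ (by norm_num), Real.sqrt_sq (by norm_num)]

lemma hardLabel_smul_hardSample {n : ℕ} (i : Fin n) :
    hardLabel i • hardSample i = ((1 / 2 : ℝ), if (i : ℕ) = 0 then (-1 : ℝ) else 1) := by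
  unfold hardLabel hardSample
  split_ifs <;> norm_num

lemma margin_hardSample_of_eq_zero {n : ℕ} {i : Fin n} (hi : (i : ℕ) = 0) (θ : ℝ × ℝ) :
    hardLabel i * dot2 (hardSample i) θ = θ.1 / 2 - θ.2 := by
  simp only [hardLabel, hardSample, hi, if_true, dot2]
  ring

lemma margin_hardSample_of_ne_zero {n : ℕ} {i : Fin n} (hi : (i : ℕ) ≠ 0) (θ : ℝ × ℝ) :
    hardLabel i * dot2 (hardSample i) θ = θ.1 / 2 + θ.2 := by
  simp only [hardLabel, hardSample, hi, if_false, dot2]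
  ring

lemma sum_hardLabel_smul_hardSample {n : ℕ} (hn : 0 < n) :
    ∑ i : Fin n, hardLabel i • hardSample i = ((n / 2 : ℝ), (n - 2 : ℝ)) := by
  obtain ⟨m, rfl⟩ := Nat.exists_eq_add_one_of_ne_zero hn.ne'
  simp only [Fin.sum_univ_succ, hardLabel_smul_hardSample, Fin.val_zero, Fin.val_succ,
    Nat.add_one_ne_zero, if_true, if_false, sum_const, card_univ, Fintype.card_fin,
    Prod.smul_mk, nsmul_eq_mul, mul_one, Prod.mk_add_mk, Nat.cast_add, Nat.cast_one,
    Prod.mk.injEq]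
  constructor <;> ring

lemma misclassified_iterate {n t : ℕ} (hn : 0 < n) (ht : 10 * t ≤ 3 * n) :
    univ.filter (fun i : Fin n => hardLabel i * dot2 (hardSample i) (iterate n t) ≤ 0) =
      {⟨0, hn⟩} := by
  have hn' : (1 : ℝ) ≤ n := by exact_mod_cast hn
  have ht' : 10 * (t : ℝ) ≤ 3 * n := by exact_mod_cast ht
  ext i
  simp only [mem_filter, mem_univ, true_and, mem_singleton, Fin.ext_iff]
  by_cases hi : (i : ℕ) = 0
  · have hmargin : hardLabel i * dot2 (hardSample i) (iterate n t) =
        (10 * t - 3 * n - 2) / (8 * n) := by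
      rw [margin_hardSample_of_eq_zero hi, iterate]
      field_simp
      ring
    simp only [hi, hmargin, iff_true]
    exact div_nonpos_of_nonpos_of_nonneg (by linarith) (by positivity)
  · have hmargin : hardLabel i * dot2 (hardSample i) (iterate n t) =
        (5 * n - 6 * t - 2) / (8 * n) := by
      rw [margin_hardSample_of_ne_zero hi, iterate]
      field_simp
      ring
    simp only [hi, hmargin, iff_false, not_le]
    exact div_pos (by linarith) (by positivity)

lemma iterate_one {n : ℕ} (hn : 0 < n) :
    ((1 : ℝ) / (2 * n)) • ((n / 2 : ℝ), (n - 2 : ℝ)) = iterate n 1 := by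
  have hn' : (n : ℝ) ≠ 0 := by positivity
  simp only [iterate, Prod.smul_mk, smul_eq_mul, Nat.cast_one, sub_self, zero_div, add_zero,
    Prod.mk.injEq]
  constructor
  · field_simp
    ring
  · field_simp

lemma iterate_succ (n t : ℕ) :
    iterate n (t + 1) = iterate n t + ((1 : ℝ) / n) • ((1 / 2 : ℝ), (-1 : ℝ)) := by
  simp only [iterate, Nat.cast_add, Nat.cast_one, Prod.smul_mk, smul_eq_mul, Prod.mk_add_mk,
    Prod.mk.injEq]
  constructor <;> ring

lemma eq_iterate {n : ℕ} (θhat : ℕ → ℝ × ℝ) (h0 : θhat 0 = 0)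
    (h1 : θhat 1 = θhat 0 + ((1 : ℝ) / (2 * n)) • ∑ i : Fin n, hardLabel i • hardSample i)
    (hstep : ∀ t, 1 ≤ t →
      θhat (t + 1) = θhat t + ((1 : ℝ) / n) •
        ∑ i ∈ univ.filter (fun i : Fin n => hardLabel i * dot2 (hardSample i) (θhat t) ≤ 0),
          hardLabel i • hardSample i)
    {t : ℕ} (ht1 : 1 ≤ t) (ht : 10 * t ≤ 3 * n) : θhat t = iterate n t := by
  have hn : 0 < n := by omega
  induction t, ht1 using Nat.le_induction with
  | base => rw [h1, h0, zero_add, sum_hardLabel_smul_hardSample hn, iterate_one hn]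
  | succ t ht1 ih =>
    have hθ := ih (by omega)
    rw [hstep t ht1, hθ, misclassified_iterate hn (by omega), sum_singleton,
      hardLabel_smul_hardSample, if_pos rfl, iterate_succ]

end BatchPerceptron

open BatchPerceptron in
theorem batch_perceptron_lower_bound {n : ℕ}
    (a : Fin n → ℝ × ℝ) (y : Fin n → ℝ)
    (ha : ∀ i, a i = if (i : ℕ) = 0 then ((1 / 2 : ℝ), (-1 : ℝ)) else ((-1 / 2 : ℝ), (-1 : ℝ)))
    (hy : ∀ i, y i = if (i : ℕ) = 0 then (1 : ℝ) else (-1 : ℝ))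
    (θhat : ℕ → ℝ × ℝ)
    (h0 : θhat 0 = 0)
    (h1 : θhat 1 = θhat 0 + ((1 : ℝ) / (2 * n)) • ∑ i, y i • a i)
    (hstep : ∀ t, 1 ≤ t →
      θhat (t + 1) = θhat t + ((1 : ℝ) / n) •
        ∑ i ∈ Finset.univ.filter (fun i => y i * dot2 (a i) (θhat t) ≤ 0), y i • a i) :
    (∀ i, (1 / 2 : ℝ) ≤ y i * dot2 (a i) ((1 : ℝ), (0 : ℝ))) ∧
    Real.sqrt (dot2 ((1 : ℝ), (0 : ℝ)) ((1 : ℝ), (0 : ℝ))) = 1 ∧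
    (∀ i, Real.sqrt (dot2 (a i) (a i)) = Real.sqrt 5 / 2) ∧
    (∀ t, 1 ≤ t → t ≤ 3 * n / 10 → ∃ i, y i * dot2 (a i) (θhat t) ≤ 0) := by
  obtain rfl : a = hardSample := funext ha
  obtain rfl : y = hardLabel := funext hy
  refine ⟨fun i => (hardLabel_mul_dot2_hardSample_one_zero i).ge, by simp [dot2],
    sqrt_dot2_hardSample_self, fun t ht1 ht => ?_⟩
  have ht' : 10 * t ≤ 3 * n := by omega
  have hn : 0 < n := by omega
  obtain ⟨i, hi⟩ : (univ.filter fun i : Fin n =>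
      hardLabel i * dot2 (hardSample i) (iterate n t) ≤ 0).Nonempty := by
    rw [misclassified_iterate hn ht']
    exact singleton_nonempty _
  exact ⟨i, eq_iterate θhat h0 h1 hstep ht1 ht' ▸ (mem_filter.1 hi).2⟩
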